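/- If S' ⊆ S is a set of generators for the observation table, s ∈ S', and there exists U ∈ T(S' \ {s}) with row_t♯(U) = row_t(s), then S' \ {s} is again a set of generators for the table. (This is the invariant establishing correctness of the generator-minimization algorithm.) -/

import Mathlib

/-!
The rows `row_t♯(U)` with `U ∈ T(S' \ {s})` form the image of a free extension, which is closed
under the algebra structure of `O^E`. This image contains `row_t(s)` by hypothesis and every other
row of `S'` via `η`, hence all of `row_t♯(T(S'))`, and so every row of the table.
-/

/-- A monad on the category of sets, given by an endofunctor `T` with unit `pure` (η)
and multiplication `mult` (μ), satisfying functoriality, naturality and the monad laws. -/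
structure SetMonad where
  T : Type → Type
  map : {X Y : Type} → (X → Y) → T X → T Y
  pure : {X : Type} → X → T X
  mult : {X : Type} → T (T X) → T X
  map_id : ∀ {X : Type} (t : T X), map id t = t
  map_comp : ∀ {X Y Z : Type} (g : Y → Z) (f : X → Y) (t : T X),
    map (g ∘ f) t = map g (map f t)
  pure_natural : ∀ {X Y : Type} (f : X → Y) (x : X), map f (pure x) = pure (f x)
  mult_natural : ∀ {X Y : Type} (f : X → Y) (t : T (T X)),
    map f (mult t) = mult (map (map f) t)
  mult_pure : ∀ {X : Type} (t : T X), mult (pure t) = t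
  mult_map_pure : ∀ {X : Type} (t : T X), mult (map pure t) = t
  mult_assoc : ∀ {X : Type} (t : T (T (T X))), mult (mult t) = mult (map mult t)

/-- An Eilenberg-Moore algebra `(carrier, str)` for the monad `M`. -/
structure AlgOver (M : SetMonad) where
  carrier : Type
  str : M.T carrier → carrier
  str_pure : ∀ x, str (M.pure x) = x
  str_mult : ∀ t, str (M.mult t) = str (M.map str t)

/-- `f` is a `T`-algebra homomorphism from `X` to `Y`: `f ∘ h = k ∘ T f`. -/
def IsHom (M : SetMonad) (X Y : AlgOver M) (f : X.carrier → Y.carrier) : Prop :=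
  ∀ t : M.T X.carrier, f (X.str t) = Y.str (M.map f t)

/-- The free `T`-algebra `(T U, μ_U)` on a set `U`. -/
def freeAlg (M : SetMonad) (U : Type) : AlgOver M where
  carrier := M.T U
  str := M.mult
  str_pure := M.mult_pure
  str_mult := M.mult_assoc

/-- The free `T`-extension `g♯ = v ∘ T g : T U → V` of a function `g : U → V`
into a `T`-algebra `(V, v)`. -/
def extAlg (M : SetMonad) {U : Type} (V : AlgOver M) (g : U → V.carrier) :
    M.T U → V.carrier :=
  fun t => V.str (M.map g t)

/-- The pointwise `T`-algebra structure on `V^A` for a `T`-algebra `V`. -/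
def powAlg (M : SetMonad) (A : Type) (V : AlgOver M) : AlgOver M where
  carrier := A → V.carrier
  str := fun t a => V.str (M.map (fun g => g a) t)
  str_pure := by
    intro x
    funext a
    show V.str (M.map (fun g => g a) (M.pure x)) = x a
    rw [M.pure_natural]
    exact V.str_pure _
  str_mult := by
    intro t
    funext a
    show V.str (M.map (fun g => g a) (M.mult t)) =
      V.str (M.map (fun g => g a) (M.map (fun t a => V.str (M.map (fun g => g a) t)) t))
    rw [M.mult_natural, V.str_mult, ← M.map_comp, ← M.map_comp]
    rfl

/-- The top part of the observation table: `row_t : S → O^E`, `row_t(s)(e) = L(se)`. -/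
def rowT (A : Type) {Oc : Type} (L : List A → Oc) (S E : Set (List A)) :
    ↥S → ↥E → Oc :=
  fun s e => L (s.1 ++ e.1)

/-- The bottom part of the observation table: `row_b : S → (O^E)^A`,
`row_b(s)(a)(e) = L(sae)`. -/
def rowB (A : Type) {Oc : Type} (L : List A → Oc) (S E : Set (List A)) :
    ↥S → A → ↥E → Oc :=
  fun s a e => L (s.1 ++ a :: e.1)

/-- The free `T`-extension `row_t♯ : T(S) → O^E`. -/
def rowTs (M : SetMonad) (A : Type) (O : AlgOver M) (L : List A → O.carrier)
    (S E : Set (List A)) : M.T ↥S → ↥E → O.carrier :=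
  extAlg M (powAlg M (↥E) O) (rowT A L S E)

/-- The free `T`-extension `row_b♯ : T(S) → (O^E)^A`. -/
def rowBs (M : SetMonad) (A : Type) (O : AlgOver M) (L : List A → O.carrier)
    (S E : Set (List A)) : M.T ↥S → A → ↥E → O.carrier :=
  extAlg M (powAlg M A (powAlg M (↥E) O)) (rowB A L S E)

theorem extAlg_map (M : SetMonad) {U W : Type} (V : AlgOver M) (g : U → V.carrier)
    (f : W → U) (t : M.T W) : extAlg M V g (M.map f t) = extAlg M V (g ∘ f) t := by
  simp only [extAlg, M.map_comp]

theorem extAlg_pure (M : SetMonad) {U : Type} (V : AlgOver M) (g : U → V.carrier) (u : U) :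
    extAlg M V g (M.pure u) = g u := by
  simp only [extAlg, M.pure_natural, V.str_pure]

theorem extAlg_mult_map (M : SetMonad) {U W : Type} (V : AlgOver M) (g : U → V.carrier)
    (f : W → M.T U) (t : M.T W) :
    extAlg M V g (M.mult (M.map f t)) = extAlg M V (extAlg M V g ∘ f) t := by
  simp only [extAlg, M.mult_natural, V.str_mult, ← M.map_comp]
  rfl

/- The range of `g♯` is closed under `k♯` whenever it contains the range of `k`: flatten the
chosen witnesses with `μ`. -/
theorem range_extAlg_subset (M : SetMonad) {U W : Type} (V : AlgOver M)
    (g : U → V.carrier) (k : W → V.carrier) (h : Set.range k ⊆ Set.range (extAlg M V g)) :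
    Set.range (extAlg M V k) ⊆ Set.range (extAlg M V g) := by
  choose f hf using fun w => h ⟨w, rfl⟩
  rintro _ ⟨t, rfl⟩
  exact ⟨M.mult (M.map f t), by rw [extAlg_mult_map]; exact congrArg (extAlg M V · t) (funext hf)⟩

theorem rowTs_map (M : SetMonad) (A : Type) (O : AlgOver M) (L : List A → O.carrier)
    (S E : Set (List A)) {W : Type} (f : W → ↥S) (t : M.T W) :
    rowTs M A O L S E (M.map f t) = extAlg M (powAlg M (↥E) O) (rowT A L S E ∘ f) t :=
  extAlg_map M _ _ f t

theorem stmt13_general (M : SetMonad) (A : Type) (O : AlgOver M)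
    (L : List A → O.carrier) (S E : Set (List A))
    (S' : Set (List A)) (hsub : S' ⊆ S)
    (hgen : ∀ t : ↥S, ∃ U : M.T ↥S',
      rowT A L S E t = rowTs M A O L S E (M.map (Set.inclusion hsub) U))
    (s : List A) (hs : s ∈ S')
    (U : M.T ↥(S' \ {s}))
    (hU : rowTs M A O L S E (M.map (Set.inclusion (Set.diff_subset.trans hsub)) U) =
      rowT A L S E ⟨s, hsub hs⟩) :
    ∀ t : ↥S, ∃ V : M.T ↥(S' \ {s}),
      rowT A L S E t =
        rowTs M A O L S E (M.map (Set.inclusion (Set.diff_subset.trans hsub)) V) := by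
  set r := rowT A L S E
  have hsub' : S' \ {s} ⊆ S := Set.sdiff_subset.trans hsub
  have generators_in_span : Set.range (r ∘ Set.inclusion hsub) ⊆
      Set.range (extAlg M (powAlg M (↥E) O) (r ∘ Set.inclusion hsub')) := by
    rintro _ ⟨x, rfl⟩
    by_cases hx : x.1 = s
    · refine ⟨U, ?_⟩
      rw [← rowTs_map, hU]
      exact congrArg r (Subtype.ext hx.symm)
    · exact ⟨M.pure ⟨x.1, x.2, hx⟩, extAlg_pure M _ _ _⟩
  intro t
  obtain ⟨Ut, hUt⟩ := hgen t
  rw [rowTs_map] at hUt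
  obtain ⟨V, hV⟩ := range_extAlg_subset M _ _ _ generators_in_span ⟨Ut, hUt.symm⟩
  exact ⟨V, by rw [rowTs_map, hV]⟩

/-- if `S'` is a set of generators, `s ∈ S'`, and `row_t(s) = row_t♯(U)`
for some `U ∈ T(S' \ {s})`, then `S' \ {s}` is again a set of generators. -/
theorem stmt13 (M : SetMonad) (A : Type) [Finite A] (O : AlgOver M)
    (L : List A → O.carrier) (S E : Set (List A)) (hSfin : S.Finite)
    (hEfin : E.Finite) (hSe : [] ∈ S) (hEe : [] ∈ E)
    (S' : Set (List A)) (hsub : S' ⊆ S)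
    (hgen : ∀ t : ↥S, ∃ U : M.T ↥S',
      rowT A L S E t = rowTs M A O L S E (M.map (Set.inclusion hsub) U))
    (s : List A) (hs : s ∈ S')
    (U : M.T ↥(S' \ {s}))
    (hU : rowTs M A O L S E (M.map (Set.inclusion (Set.diff_subset.trans hsub)) U) =
      rowT A L S E ⟨s, hsub hs⟩) :
    ∀ t : ↥S, ∃ V : M.T ↥(S' \ {s}),
      rowT A L S E t =
        rowTs M A O L S E (M.map (Set.inclusion (Set.diff_subset.trans hsub)) V) :=
  stmt13_general M A O L S E S' hsub hgen s hs U hU
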